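/- For all p, q, x, y, a, b ∈ ℂ: θ[p,q](x−y)·θ[p,q](a−b)·θ₁(x−b)·θ₁(a−y) − θ[p,q](x−b)·θ[p,q](a−y)·θ₁(x−y)·θ₁(a−b) + θ[p,q](x−y+a−b)·θ[p,q](0)·θ₁(x−a)·θ₁(y−b) = 0. (This is the genus-one case of Fay's trisecant identity used in the paper; it is equivalent to the Schlesinger transformation S^{(v+w_{ab})}(x,y) = S^{(v)}(x,y) − S^{(v)}(x,b)S^{(v)}(a,y)/S^{(v)}(a,b) of the Baker–Akhiezer kernel in genus one, where w_{ab} is the normalized third-kind differential with residues +1 at a and −1 at b.) -/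

import Mathlib

/-- Genus-one theta function with characteristics:
`θ[p,q](z) = Σ_{n ∈ ℤ} exp(πiμ(n+p)² + 2πi(n+p)(z+q))`. -/
noncomputable def theta (μ p q z : ℂ) : ℂ :=
  ∑' n : ℤ, Complex.exp ((Real.pi : ℂ) * Complex.I * μ * ((n : ℂ) + p) ^ 2 +
    2 * (Real.pi : ℂ) * Complex.I * ((n : ℂ) + p) * (z + q))

/-- The odd theta function `θ₁ = θ[1/2,1/2]`. -/
noncomputable def theta₁ (μ z : ℂ) : ℂ := theta μ (1/2) (1/2) z

/-!
Multiplying out, each of the three products of four theta series is a sum over `ℤ⁴`, which we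
split according to the parity of `n₁ + n₂ + n₃ + n₄`. Affine bijections of `ℤ⁴` in the spirit of
Riemann's theta relation preserve the quadratic part of the exponent and change its linear part
by a multiple of `2πi`; they identify the even part of the first product with the even part of the
second, the odd part of the second with the odd part of the third, and (with a shift by `πi`, i.e.
a sign) the odd part of the first with minus the even part of the third. The alternating sum of
the three products therefore cancels.
-/

open Complex
open scoped Real

local notation "ℤ⁴" => ℤ × ℤ × ℤ × ℤ

/-- The point of `ℤ⁴` with first coordinates `v₁, v₂, v₃` and coordinate sum `2 v₄ + ε`. -/
def parityLift (ε : ℤ) (v : ℤ⁴) : ℤ⁴ :=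
  (v.1, v.2.1, v.2.2.1, 2 * v.2.2.2 + ε - v.1 - v.2.1 - v.2.2.1)

def parityEquiv : ℤ⁴ ⊕ ℤ⁴ ≃ ℤ⁴ where
  toFun := Sum.elim (parityLift 0) (parityLift 1)
  invFun n :=
    if (n.1 + n.2.1 + n.2.2.1 + n.2.2.2) % 2 = 0
    then .inl (n.1, n.2.1, n.2.2.1, (n.1 + n.2.1 + n.2.2.1 + n.2.2.2) / 2)
    else .inr (n.1, n.2.1, n.2.2.1, (n.1 + n.2.1 + n.2.2.1 + n.2.2.2) / 2)
  left_inv := by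
    rintro (⟨i, j, l, k⟩ | ⟨i, j, l, k⟩) <;>
      dsimp only [Sum.elim_inl, Sum.elim_inr, parityLift] <;> split_ifs <;>
      first | omega | simp only [Sum.inl.injEq, Sum.inr.injEq, Prod.mk.injEq, true_and]; omega
  right_inv := by
    rintro ⟨i, j, l, k⟩
    dsimp only
    split_ifs <;> simp only [Sum.elim_inl, Sum.elim_inr, parityLift, Prod.mk.injEq, true_and] <;>
      omega

theorem tsum_eq_tsum_parityLift_add_tsum_parityLift {E : Type*} [NormedAddCommGroup E]
    [CompleteSpace E] {F : ℤ⁴ → E} (hF : Summable F) :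
    ∑' n, F n = ∑' v, F (parityLift 0 v) + ∑' v, F (parityLift 1 v) := by
  have hF' : Summable (F ∘ parityEquiv) := parityEquiv.summable_iff.2 hF
  rw [← parityEquiv.tsum_eq]
  exact Summable.tsum_sum (f := F ∘ parityEquiv) (hF'.comp_injective Sum.inl_injective)
    (hF'.comp_injective Sum.inr_injective)

/-- `theta μ p q z = ∑' n, thetaTerm μ p (z + q) n` definitionally. -/
noncomputable def thetaTerm (μ c z : ℂ) (n : ℤ) : ℂ :=
  exp ((π : ℂ) * I * μ * ((n : ℂ) + c) ^ 2 + 2 * (π : ℂ) * I * ((n : ℂ) + c) * z)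

theorem thetaTerm_eq_mul_jacobiTheta₂_term (μ c z : ℂ) (n : ℤ) :
    thetaTerm μ c z n = exp ((π : ℂ) * I * μ * c ^ 2 + 2 * (π : ℂ) * I * c * z) *
      jacobiTheta₂_term n (μ * c + z) μ := by
  rw [thetaTerm, jacobiTheta₂_term, ← exp_add]
  congr 1
  ring

theorem summable_norm_thetaTerm {μ : ℂ} (hμ : 0 < μ.im) (c z : ℂ) :
    Summable fun n => ‖thetaTerm μ c z n‖ := by
  simp only [summable_norm_iff, thetaTerm_eq_mul_jacobiTheta₂_term]
  exact ((summable_jacobiTheta₂_term_iff _ _).2 hμ).mul_left _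

theorem tsum_mul_tsum_mul_tsum_mul_tsum_of_summable_norm {R : Type*} [NormedRing R]
    [CompleteSpace R] {ι₁ ι₂ ι₃ ι₄ : Type*} {f₁ : ι₁ → R} {f₂ : ι₂ → R} {f₃ : ι₃ → R}
    {f₄ : ι₄ → R} (h₁ : Summable fun n => ‖f₁ n‖) (h₂ : Summable fun n => ‖f₂ n‖)
    (h₃ : Summable fun n => ‖f₃ n‖) (h₄ : Summable fun n => ‖f₄ n‖) :
    (∑' n, f₁ n) * (∑' n, f₂ n) * (∑' n, f₃ n) * (∑' n, f₄ n) =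
      ∑' n : ι₁ × ι₂ × ι₃ × ι₄, f₁ n.1 * (f₂ n.2.1 * (f₃ n.2.2.1 * f₄ n.2.2.2)) := by
  rw [mul_assoc, mul_assoc, tsum_mul_tsum_of_summable_norm h₃ h₄,
    tsum_mul_tsum_of_summable_norm h₂ (h₃.mul_norm h₄),
    tsum_mul_tsum_of_summable_norm h₁ (h₂.mul_norm (h₃.mul_norm h₄))]

noncomputable def thetaProdTerm (μ p q u₁ u₂ u₃ u₄ : ℂ) (n : ℤ⁴) : ℂ :=
  thetaTerm μ p (u₁ + q) n.1 * (thetaTerm μ p (u₂ + q) n.2.1 *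
    (thetaTerm μ (1/2) (u₃ + 1/2) n.2.2.1 * thetaTerm μ (1/2) (u₄ + 1/2) n.2.2.2))

theorem theta_mul_theta_mul_theta₁_mul_theta₁ {μ : ℂ} (hμ : 0 < μ.im) (p q u₁ u₂ u₃ u₄ : ℂ) :
    theta μ p q u₁ * theta μ p q u₂ * theta₁ μ u₃ * theta₁ μ u₄ =
      ∑' n, thetaProdTerm μ p q u₁ u₂ u₃ u₄ n :=
  tsum_mul_tsum_mul_tsum_mul_tsum_of_summable_norm (summable_norm_thetaTerm hμ _ _)
    (summable_norm_thetaTerm hμ _ _) (summable_norm_thetaTerm hμ _ _)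
    (summable_norm_thetaTerm hμ _ _)

theorem summable_thetaProdTerm {μ : ℂ} (hμ : 0 < μ.im) (p q u₁ u₂ u₃ u₄ : ℂ) :
    Summable (thetaProdTerm μ p q u₁ u₂ u₃ u₄) :=
  ((summable_norm_thetaTerm hμ _ _).mul_norm <| (summable_norm_thetaTerm hμ _ _).mul_norm <|
    (summable_norm_thetaTerm hμ _ _).mul_norm (summable_norm_thetaTerm hμ _ _)).of_norm

section Reindexing

def reindex₁₂ (v : ℤ⁴) : ℤ⁴ :=
  (v.1 + v.2.1 + v.2.2.1 - v.2.2.2, v.2.2.2 - v.2.2.1, v.2.2.2 - v.2.1, v.2.2.2)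

theorem reindex₁₂_involutive : Function.Involutive reindex₁₂ := by
  rintro ⟨i, j, l, k⟩
  simp only [reindex₁₂, Prod.mk.injEq, and_true]
  omega

def reindex₁₃ : Equiv.Perm ℤ⁴ where
  toFun v := (v.2.2.2 + 1, v.1 + v.2.1 - v.2.2.2 - 1, v.1 + v.2.2.1 - v.2.2.2 - 1,
    v.1 + v.2.1 + v.2.2.1 - v.2.2.2 - 1)
  invFun v := (v.1 + v.2.1 + v.2.2.1 - v.2.2.2, v.2.2.2 - v.2.2.1, v.2.2.2 - v.2.1, v.1 - 1)
  left_inv := by rintro ⟨i, j, l, k⟩; simp only [Prod.mk.injEq]; omega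
  right_inv := by rintro ⟨i, j, l, k⟩; simp only [Prod.mk.injEq]; omega

def reindex₂₃ (v : ℤ⁴) : ℤ⁴ :=
  (v.2.2.2 + 1, v.1 + v.2.1 - v.2.2.2 - 1, v.1 + v.2.2.1 - v.2.2.2 - 1, v.1 - 1)

theorem reindex₂₃_involutive : Function.Involutive reindex₂₃ := by
  rintro ⟨i, j, l, k⟩
  simp only [reindex₂₃, Prod.mk.injEq]
  omega

variable (μ p q x y a b : ℂ) (v : ℤ⁴)

theorem thetaProdTerm_parityLift_zero_reindex₁₂ :
    thetaProdTerm μ p q (x - y) (a - b) (x - b) (a - y) (parityLift 0 v) =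
      thetaProdTerm μ p q (x - b) (a - y) (x - y) (a - b) (parityLift 0 (reindex₁₂ v)) := by
  obtain ⟨i, j, l, k⟩ := v
  simp only [thetaProdTerm, thetaTerm, parityLift, reindex₁₂, ← exp_add]
  congr 1
  push_cast
  ring

theorem thetaProdTerm_parityLift_one_reindex₁₃ :
    thetaProdTerm μ p q (x - y) (a - b) (x - b) (a - y) (parityLift 1 v) =
      -thetaProdTerm μ p q (x - y + a - b) 0 (x - a) (y - b) (parityLift 0 (reindex₁₃ v)) := by
  obtain ⟨i, j, l, k⟩ := v
  simp only [thetaProdTerm, thetaTerm, parityLift, reindex₁₃, Equiv.coe_fn_mk, ← exp_add,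
    ← exp_add_pi_mul_I]
  exact exp_eq_exp_iff_exists_int.2 ⟨2 * k + 1 - i - j - l, by push_cast; ring⟩

theorem thetaProdTerm_parityLift_one_reindex₂₃ :
    thetaProdTerm μ p q (x - b) (a - y) (x - y) (a - b) (parityLift 1 v) =
      thetaProdTerm μ p q (x - y + a - b) 0 (x - a) (y - b) (parityLift 1 (reindex₂₃ v)) := by
  obtain ⟨i, j, l, k⟩ := v
  simp only [thetaProdTerm, thetaTerm, parityLift, reindex₂₃, ← exp_add]
  exact exp_eq_exp_iff_exists_int.2 ⟨k + 1 - i, by push_cast; ring⟩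

end Reindexing

/-- The genus-one case of Fay's trisecant identity:
`θ[p,q](x−y)θ[p,q](a−b)θ₁(x−b)θ₁(a−y) − θ[p,q](x−b)θ[p,q](a−y)θ₁(x−y)θ₁(a−b)
 + θ[p,q](x−y+a−b)θ[p,q](0)θ₁(x−a)θ₁(y−b) = 0`. -/
theorem fay_trisecant_genus_one (μ : ℂ) (hμ : 0 < μ.im) (p q x y a b : ℂ) :
    theta μ p q (x - y) * theta μ p q (a - b) * theta₁ μ (x - b) * theta₁ μ (a - y) -
      theta μ p q (x - b) * theta μ p q (a - y) * theta₁ μ (x - y) * theta₁ μ (a - b) +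
      theta μ p q (x - y + a - b) * theta μ p q 0 * theta₁ μ (x - a) * theta₁ μ (y - b)
      = 0 := by
  set T₁ := thetaProdTerm μ p q (x - y) (a - b) (x - b) (a - y)
  set T₂ := thetaProdTerm μ p q (x - b) (a - y) (x - y) (a - b)
  set T₃ := thetaProdTerm μ p q (x - y + a - b) 0 (x - a) (y - b)
  have even₁₂ : ∑' v, T₁ (parityLift 0 v) = ∑' v, T₂ (parityLift 0 v) :=
    (tsum_congr (thetaProdTerm_parityLift_zero_reindex₁₂ μ p q x y a b)).trans
      (reindex₁₂_involutive.toPerm.tsum_eq fun v => T₂ (parityLift 0 v))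
  have odd₁_even₃ : ∑' v, T₁ (parityLift 1 v) = -∑' v, T₃ (parityLift 0 v) := by
    rw [← reindex₁₃.tsum_eq fun v => T₃ (parityLift 0 v), ← tsum_neg]
    exact tsum_congr (thetaProdTerm_parityLift_one_reindex₁₃ μ p q x y a b)
  have odd₂₃ : ∑' v, T₂ (parityLift 1 v) = ∑' v, T₃ (parityLift 1 v) :=
    (tsum_congr (thetaProdTerm_parityLift_one_reindex₂₃ μ p q x y a b)).trans
      (reindex₂₃_involutive.toPerm.tsum_eq fun v => T₃ (parityLift 1 v))
  rw [theta_mul_theta_mul_theta₁_mul_theta₁ hμ, theta_mul_theta_mul_theta₁_mul_theta₁ hμ,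
    theta_mul_theta_mul_theta₁_mul_theta₁ hμ,
    tsum_eq_tsum_parityLift_add_tsum_parityLift (summable_thetaProdTerm hμ ..),
    tsum_eq_tsum_parityLift_add_tsum_parityLift (summable_thetaProdTerm hμ ..),
    tsum_eq_tsum_parityLift_add_tsum_parityLift (summable_thetaProdTerm hμ ..),
    even₁₂, odd₁_even₃, odd₂₃]
  ring
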